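/- Narrow lemma (pointwise broad/narrow dichotomy): let K ≥ 2 and let a_1, …, a_M ∈ ℂ with M ≥ 1, and let S := ∑_{j=1}^M a_j. Fix an adjacency relation on {1,…,M} (e.g. |j−j'| ≤ 1) and suppose the 'narrow' bound fails: |S| > (1 + 1/K) · max_j |∑_{j' near j} a_{j'}|. Then |S| ≤ M · (1 − (1 + 1/K)^{−1})^{−1} · max_{j not near j'} |a_j a_{j'}|^{1/2}, in particular |S| ≤ M(K+1) · max_{j not near j'} |a_j|^{1/2} |a_{j'}|^{1/2}. -/

import Mathlib

/-- Narrow lemma (pointwise broad/narrow dichotomy): if the narrow bound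
`|S| ≤ (1 + 1/K) · max_j |∑_{j' near j} a_{j'}|` fails (for every `j`), then there is a
non-near pair `(j, j')` with `|S| ≤ M(K+1)·|a_j|^{1/2}|a_{j'}|^{1/2}`. -/
theorem narrow_lemma (M : ℕ) (hM : 1 ≤ M) (K : ℝ) (hK : 2 ≤ K)
    (a : Fin M → ℂ) (near : Fin M → Fin M → Prop) [DecidableRel near]
    (hfail : ∀ j : Fin M,
      (1 + 1 / K) * ‖∑ j' ∈ Finset.univ.filter (fun j' => near j j'), a j'‖
        < ‖∑ j', a j'‖) :
    ∃ j j' : Fin M, ¬ near j j' ∧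
      ‖∑ i, a i‖ ≤
        (M : ℝ) * (K + 1) * Real.sqrt (‖a j‖) * Real.sqrt (‖a j'‖) := by
  set S := ∑ j', a j' with hSdef
  have hK0 : (0:ℝ) < K := by linarith
  have hK1 : (0:ℝ) < 1 + 1/K := by positivity
  have hm0 : (0:ℝ) < (M:ℝ) := by exact_mod_cast hM
  have hS0 : 0 < ‖S‖ := by
    have h := hfail ⟨0, hM⟩
    have h0 : 0 ≤ (1+1/K) * ‖∑ j' ∈ Finset.univ.filter (fun j' => near ⟨0, hM⟩ j'), a j'‖ := by positivity
    linarith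
  -- choose j maximizing |a j|
  obtain ⟨j, -, hj⟩ := Finset.exists_max_image Finset.univ (fun i => ‖a i‖)
    ⟨⟨0, hM⟩, Finset.mem_univ _⟩
  have hjS : ‖S‖ ≤ (M:ℝ) * ‖a j‖ := by
    have h1 : ‖S‖ ≤ ∑ i, ‖a i‖ := norm_sum_le _ _
    have h2 : ∑ i, ‖a i‖ ≤ Finset.univ.card • ‖a j‖ :=
      Finset.sum_le_card_nsmul _ _ _ (fun i hi => hj i hi)
    simp only [Finset.card_univ, Fintype.card_fin, nsmul_eq_mul] at h2
    linarith
  -- the not-near sum is large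
  set t := Finset.univ.filter (fun j' => ¬ near j j') with ht
  have hsplit : (∑ j' ∈ Finset.univ.filter (fun j' => near j j'), a j') + ∑ j' ∈ t, a j' = S :=
    Finset.sum_filter_add_sum_filter_not _ _ _
  have hnear := hfail j
  have htbig : ‖S‖ / (K + 1) < ‖∑ j' ∈ t, a j'‖ := by
    have h1 : ‖S‖ ≤ ‖∑ j' ∈ Finset.univ.filter (fun j' => near j j'), a j'‖
        + ‖∑ j' ∈ t, a j'‖ := by
      calc ‖S‖ = ‖(∑ j' ∈ Finset.univ.filter (fun j' => near j j'), a j')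
          + ∑ j' ∈ t, a j'‖ := by rw [hsplit]
        _ ≤ _ := norm_add_le _ _
    have h2 : ‖∑ j' ∈ Finset.univ.filter (fun j' => near j j'), a j'‖
        < ‖S‖ / (1 + 1/K) := by
      rw [lt_div_iff₀ hK1]; linarith [hnear]
    have h3 : ‖S‖ - ‖S‖ / (1 + 1/K) = ‖S‖ / (K + 1) := by
      field_simp
      ring
    linarith
  have htpos : 0 < ‖∑ j' ∈ t, a j'‖ := lt_of_le_of_lt (by positivity) htbig
  have htne : t.Nonempty := by
    by_contra h
    rw [Finset.not_nonempty_iff_eq_empty] at h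
    simp [h] at htpos
  obtain ⟨j', hj't, hj'⟩ := Finset.exists_max_image t (fun i => ‖a i‖) htne
  have hj'nn : ¬ near j j' := by
    have := Finset.mem_filter.mp hj't
    exact this.2
  refine ⟨j, j', hj'nn, ?_⟩
  have hj'S : ‖S‖ / (K + 1) ≤ (M:ℝ) * ‖a j'‖ := by
    have h1 : ‖∑ j' ∈ t, a j'‖ ≤ ∑ i ∈ t, ‖a i‖ :=
      norm_sum_le _ _
    have h2 : ∑ i ∈ t, ‖a i‖ ≤ t.card • ‖a j'‖ :=
      Finset.sum_le_card_nsmul _ _ _ (fun i hi => hj' i hi)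
    have h3 : (t.card : ℝ) ≤ (M:ℝ) := by
      exact_mod_cast (Finset.card_le_card (Finset.filter_subset _ _)).trans
        (le_of_eq (by simp))
    have h4 : 0 ≤ ‖a j'‖ := norm_nonneg _
    rw [nsmul_eq_mul] at h2
    nlinarith
  -- combine
  set c := ‖S‖ with hc
  set x := ‖a j‖ with hx
  set y := ‖a j'‖ with hy
  have hx0 : 0 ≤ x := norm_nonneg _
  have hy0 : 0 ≤ y := norm_nonneg _
  have hc0 : 0 ≤ c := le_of_lt hS0
  have hK1' : (1:ℝ) ≤ K + 1 := by linarith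
  have h2 : c ≤ (M:ℝ) * (K+1) * y := by
    rw [div_le_iff₀ (by linarith : (0:ℝ) < K + 1)] at hj'S
    nlinarith
  have key : c^2 ≤ ((M:ℝ) * (K+1))^2 * (x * y) := by
    nlinarith [mul_le_mul hjS h2 hc0 (by positivity : (0:ℝ) ≤ (M:ℝ) * x)]
  have hMK : (0:ℝ) ≤ (M:ℝ) * (K+1) := by positivity
  calc c = Real.sqrt (c^2) := by rw [Real.sqrt_sq hc0]
    _ ≤ Real.sqrt (((M:ℝ) * (K+1))^2 * (x * y)) := Real.sqrt_le_sqrt key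
    _ = (M:ℝ) * (K+1) * (Real.sqrt x * Real.sqrt y) := by
        rw [Real.sqrt_mul (by positivity), Real.sqrt_sq hMK, Real.sqrt_mul hx0]
    _ = (M:ℝ) * (K + 1) * Real.sqrt x * Real.sqrt y := by ring
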